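/- Let r ≥ 2 and for each j ∈ ZMod(3r−1) define the diagonal (3r−1)×(3r−1) complex matrix Π_j = Σ_{t=0}^{r−1} |j⊕t⟩⟨j⊕t|, where ⊕ denotes addition modulo 3r−1 and |m⟩⟨m| is the diagonal matrix with a single 1 in position (m,m). Then each Π_j is an orthogonal projection of rank r, Π_j·Π_{j'} = 0 whenever j and j' are adjacent in AR(r) (so (Π_j) is a rank-r projective representation of AR(r) in dimension 3r−1), and Σ_{j∈ZMod(3r−1)} Π_j = r·𝟙. -/

import Mathlib

open scoped Classical ComplexOrder Kronecker
noncomputable section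

/-- The circulant graph `AR r` on `ZMod (3r-1)`: `j` and `k` are adjacent iff
`j - k ≡ ±s (mod 3r-1)` for some `s ∈ {r, …, 2r-1}`. -/
def AR (r : ℕ) : SimpleGraph (ZMod (3 * r - 1)) where
  Adj j k := j ≠ k ∧ ∃ s : ℕ, r ≤ s ∧ s ≤ 2 * r - 1 ∧
    (j - k = (s : ZMod (3 * r - 1)) ∨ k - j = (s : ZMod (3 * r - 1)))
  symm := by
    constructor
    rintro j k ⟨h1, s, hs1, hs2, h3⟩
    exact ⟨h1.symm, s, hs1, hs2, h3.symm⟩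
  loopless := by constructor; rintro j ⟨h1, -⟩; exact h1 rfl

/-!
Each `Π_j` is the coordinate projection onto the arc `{j, j+1, …, j+r-1}` of the cycle
`ZMod (3r-1)`. Coordinate projections are Hermitian idempotents whose rank is the size of the
support, they multiply by intersecting supports, and every point of the cycle lies on exactly
`r` of the arcs. Adjacent vertices `j, j'` differ by some `s` with `r ≤ s` and `s + r ≤ 3r-1`,
which makes their arcs disjoint: a common point `m = j + u = j' + u'` with `u, u' < r` would
force `u' = u + s ≥ r`.
-/

open Matrix Finset

section CoordProj

variable {n R : Type*} [DecidableEq n]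

def coordProj [Zero R] [One R] (s : Finset n) : Matrix n n R :=
  diagonal fun i => if i ∈ s then 1 else 0

theorem sum_single_self_eq_coordProj [AddCommMonoidWithOne R] (s : Finset n) :
    ∑ i ∈ s, single i i (1 : R) = coordProj s := by
  simp only [← diagonal_single, ← diagonalAddMonoidHom_apply, ← map_sum, coordProj]
  congr 1
  ext k
  simp [Finset.sum_apply, Pi.single_apply]

theorem coordProj_isHermitian [Semiring R] [StarRing R] (s : Finset n) :
    (coordProj s : Matrix n n R).IsHermitian := by
  rw [IsHermitian, coordProj, diagonal_conjTranspose]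
  congr 1
  ext i
  by_cases h : i ∈ s <;> simp [h]

theorem sum_coordProj_eq_smul_one [Semiring R] {ι : Type*} [Fintype ι] (S : ι → Finset n)
    {k : ℕ} (hk : ∀ i, #{a | i ∈ S a} = k) :
    ∑ a, (coordProj (S a) : Matrix n n R) = (k : R) • 1 := by
  simp only [coordProj, ← diagonalAddMonoidHom_apply, ← map_sum, smul_one_eq_diagonal]
  congr 1
  ext i
  simp [Finset.sum_apply, hk]

variable [Fintype n]

theorem coordProj_mul_coordProj [Semiring R] (s t : Finset n) :
    (coordProj s * coordProj t : Matrix n n R) = coordProj (s ∩ t) := by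
  rw [coordProj, coordProj, diagonal_mul_diagonal, coordProj]
  congr 1
  ext i
  by_cases hs : i ∈ s <;> by_cases ht : i ∈ t <;> simp [hs, ht]

theorem coordProj_mul_self [Semiring R] (s : Finset n) :
    (coordProj s * coordProj s : Matrix n n R) = coordProj s := by
  rw [coordProj_mul_coordProj, inter_self]

theorem coordProj_mul_of_disjoint [Semiring R] {s t : Finset n} (h : Disjoint s t) :
    (coordProj s * coordProj t : Matrix n n R) = 0 := by
  rw [coordProj_mul_coordProj, disjoint_iff_inter_eq_empty.mp h, coordProj]
  simp

theorem rank_coordProj [Field R] (s : Finset n) : (coordProj s : Matrix n n R).rank = #s := by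
  classical
  rw [coordProj, rank_diagonal, Fintype.card_subtype]
  congr 1
  ext i
  simp

end CoordProj

section Arc

variable {n : ℕ}

def arc (j : ZMod n) (r : ℕ) : Finset (ZMod n) :=
  (range r).image fun t : ℕ => j + t

theorem injOn_add_natCast {r : ℕ} (hr : r ≤ n) (j : ZMod n) :
    Set.InjOn (fun t : ℕ => j + t) (range r) := by
  intro a ha b hb hab
  have ha : a < n := (mem_range.mp ha).trans_le hr
  have hb : b < n := (mem_range.mp hb).trans_le hr
  rw [← ZMod.val_cast_of_lt ha, ← ZMod.val_cast_of_lt hb, add_left_cancel hab]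

theorem card_arc {r : ℕ} (hr : r ≤ n) (j : ZMod n) : #(arc j r) = r := by
  rw [arc, card_image_of_injOn (injOn_add_natCast hr j), card_range]

theorem sum_single_arc {R : Type*} [AddCommMonoidWithOne R] {r : ℕ} (hr : r ≤ n) (j : ZMod n) :
    ∑ t ∈ range r, single (j + (t : ZMod n)) (j + (t : ZMod n)) (1 : R) = coordProj (arc j r) := by
  rw [arc, ← sum_single_self_eq_coordProj, sum_image (injOn_add_natCast hr j)]

variable [NeZero n]

theorem mem_arc {j m : ZMod n} {r : ℕ} : m ∈ arc j r ↔ (m - j).val < r := by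
  simp only [arc, mem_image, mem_range]
  constructor
  · rintro ⟨t, ht, rfl⟩
    rw [add_sub_cancel_left, ZMod.val_natCast]
    exact (Nat.mod_le t n).trans_lt ht
  · intro h
    exact ⟨(m - j).val, h, by rw [ZMod.natCast_zmod_val, add_sub_cancel]⟩

theorem card_filter_mem_arc {r : ℕ} (hr : r ≤ n) (m : ZMod n) : #{j | m ∈ arc j r} = r := by
  have : ({j | m ∈ arc j r} : Finset (ZMod n)) = (arc 0 r).map (Equiv.subLeft m).toEmbedding := by
    ext j
    simp [mem_map_equiv, mem_arc, sub_eq_neg_add]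
  rw [this, card_map, card_arc hr]

theorem disjoint_arc_of_sub_eq_natCast {j j' : ZMod n} {r s : ℕ} (h : j - j' = s)
    (hrs : r ≤ s) (hsn : s + r ≤ n) : Disjoint (arc j r) (arc j' r) := by
  refine disjoint_left.mpr fun m hm hm' => ?_
  rw [mem_arc] at hm hm'
  have hs : (s : ZMod n).val = s := ZMod.val_cast_of_lt (by omega)
  have : (m - j').val = (m - j).val + s := by
    rw [← hs, ← ZMod.val_add_of_lt (by omega), ← h, sub_add_sub_cancel]
  omega

end Arc

theorem AR_rank_r_PR_general (r : ℕ) [NeZero (3 * r - 1)]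
    (P : ZMod (3 * r - 1) → Matrix (ZMod (3 * r - 1)) (ZMod (3 * r - 1)) ℂ)
    (hdef : ∀ j, P j = ∑ t ∈ Finset.range r,
      Matrix.single (j + (t : ZMod (3 * r - 1)))
        (j + (t : ZMod (3 * r - 1))) (1 : ℂ)) :
    (∀ j, (P j).IsHermitian) ∧ (∀ j, P j * P j = P j) ∧
    (∀ j, (P j).rank = r) ∧
    (∀ j j', (AR r).Adj j j' → P j * P j' = 0) ∧
    ∑ j, P j = (r : ℂ) • (1 : Matrix (ZMod (3 * r - 1)) (ZMod (3 * r - 1)) ℂ) := by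
  have hrn : r ≤ 3 * r - 1 := by omega
  have hP : ∀ j, P j = coordProj (arc j r) := fun j => (hdef j).trans (sum_single_arc hrn j)
  simp only [hP]
  refine ⟨fun j => coordProj_isHermitian _, fun j => coordProj_mul_self _,
    fun j => by rw [rank_coordProj, card_arc hrn], ?_,
    sum_coordProj_eq_smul_one _ (card_filter_mem_arc hrn)⟩
  rintro j j' ⟨-, s, hrs, hsr, hjj' | hj'j⟩
  · exact coordProj_mul_of_disjoint (disjoint_arc_of_sub_eq_natCast hjj' hrs (by omega))
  · exact coordProj_mul_of_disjoint (disjoint_arc_of_sub_eq_natCast hj'j hrs (by omega)).symm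

theorem AR_rank_r_PR (r : ℕ) (hr : 2 ≤ r) [NeZero (3 * r - 1)]
    (P : ZMod (3 * r - 1) → Matrix (ZMod (3 * r - 1)) (ZMod (3 * r - 1)) ℂ)
    (hdef : ∀ j, P j = ∑ t ∈ Finset.range r,
      Matrix.single (j + (t : ZMod (3 * r - 1)))
        (j + (t : ZMod (3 * r - 1))) (1 : ℂ)) :
    (∀ j, (P j).IsHermitian) ∧ (∀ j, P j * P j = P j) ∧
    (∀ j, (P j).rank = r) ∧
    (∀ j j', (AR r).Adj j j' → P j * P j' = 0) ∧
    ∑ j, P j = (r : ℂ) • (1 : Matrix (ZMod (3 * r - 1)) (ZMod (3 * r - 1)) ℂ) :=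
  AR_rank_r_PR_general r P hdef
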